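/- arXiv:2602.12371 — 2 statements merged into one kernel-verified Lean document; each statement's English description precedes it below -/
import Mathlib

section
/- Let k ≥ 2 be a fixed integer. For every prime p, the local Euler factor of g_k satisfies 1 + ∑_{m ≥ 2} g_k(p^m)/p^m = (1 - 1/p)·(1 - 1/k + (1/k)(1 - 1/p)^{-k}), the series on the left being absolutely convergent. -/
open Finset ArithmeticFunction Filter Asymptotics

/-- The Piltz divisor function `d_k(n)`: the number of ways of writing `n`
as an ordered product of `k` positive integers (the `k`-fold Dirichlet
convolution of the constant-one function). -/
noncomputable def piltz (k n : ℕ) : ℕ := (ArithmeticFunction.zeta ^ k : ArithmeticFunction ℕ) n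

/-- `D_k(n) = d_k(n) / k^{ω(n)}`. -/
noncomputable def Dk (k n : ℕ) : ℝ := (piltz k n : ℝ) / (k : ℝ) ^ n.primeFactors.card

/-- `n` is 2-full: every prime dividing `n` divides it at least twice. -/
def TwoFull (n : ℕ) : Prop := ∀ p ∈ n.primeFactors, p ^ 2 ∣ n

instance : DecidablePred TwoFull := fun n =>
  inferInstanceAs (Decidable (∀ p ∈ n.primeFactors, p ^ 2 ∣ n))

/-- The characteristic function of 2-full integers. -/
noncomputable def s2 (n : ℕ) : ℝ := if TwoFull n then 1 else 0

/-- `g_k(n) = ((k-1)/k) · s₂(n) · D_{k-1}(n)`. -/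
noncomputable def gk (k n : ℕ) : ℝ := ((k : ℝ) - 1) / k * s2 n * Dk (k - 1) n

/-- The Euler product constant `A_k`. -/
noncomputable def Ak (k : ℕ) : ℝ :=
  ∏' p : Nat.Primes,
    (1 - 1 / ((p : ℕ) : ℝ)) * (1 - 1 / k + (1 / k : ℝ) * ((1 - 1 / ((p : ℕ) : ℝ)) ^ k)⁻¹)

/-- `G_k(q) = A_k · ∏_{p ∣ q} k / (k - 1 + (1 - 1/p)^{-k})`. -/
noncomputable def Gk (k q : ℕ) : ℝ :=
  Ak k * ∏ p ∈ q.primeFactors, (k : ℝ) / ((k : ℝ) - 1 + ((1 - 1 / (p : ℝ)) ^ k)⁻¹)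

/-! On prime powers `p ^ m` with `m ≥ 2`, `g_{j+2}` equals `binom(m + j, j) / (j + 2)`, so the local
factor is a tail of the binomial series `∑ binom(m + j, j) x^m = (1 - x)^{-(j+1)}` at `x = 1/p`,
from which the first two terms `1 + (j + 1) x` are removed. -/

lemma zeta_pow_succ_apply_prime_pow (j : ℕ) {p : ℕ} (hp : p.Prime) (n : ℕ) :
    (zeta ^ (j + 1) : ArithmeticFunction ℕ) (p ^ n) = (n + j).choose j := by
  induction j generalizing n with
  | zero => simp [zeta_apply, hp.ne_zero]
  | succ j ih =>
    rw [pow_succ, mul_zeta_apply, Nat.sum_divisors_prime_pow hp]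
    simp only [ih]
    rw [Nat.sum_range_add_choose, add_assoc]

lemma twoFull_prime_pow {p m : ℕ} (hp : p.Prime) (hm : 2 ≤ m) : TwoFull (p ^ m) := by
  intro q hq
  rw [Nat.primeFactors_prime_pow (by omega) hp, Finset.mem_singleton] at hq
  subst hq
  exact pow_dvd_pow q hm

lemma gk_prime_pow (j : ℕ) {p m : ℕ} (hp : p.Prime) (hm : 2 ≤ m) :
    gk (j + 2) (p ^ m) = ((m + j).choose j : ℝ) / (j + 2) := by
  have hpiltz : piltz (j + 2 - 1) (p ^ m) = (m + j).choose j :=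
    zeta_pow_succ_apply_prime_pow j hp m
  rw [gk, s2, if_pos (twoFull_prime_pow hp hm), Dk, hpiltz,
    Nat.primeFactors_prime_pow (by omega) hp, Finset.card_singleton, pow_one,
    show j + 2 - 1 = j + 1 by omega]
  have hj1 : (j : ℝ) + 1 ≠ 0 := by positivity
  push_cast
  field_simp
  ring

lemma hasSum_choose_mul_geometric_tail {𝕜 : Type*} [NormedField 𝕜] [CompleteSpace 𝕜]
    (j : ℕ) {x : 𝕜} (hx : ‖x‖ < 1) :
    HasSum (fun m : ℕ => ((m + 2 + j).choose j : 𝕜) * x ^ (m + 2))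
      (((1 - x) ^ (j + 1))⁻¹ - (1 + (j + 1) * x)) := by
  have hfull := hasSum_choose_mul_geometric_of_norm_lt_one j hx
  have hhead : ∑ i ∈ range 2, ((i + j).choose j : 𝕜) * x ^ i = 1 + (j + 1) * x := by
    simp [Finset.sum_range_succ, add_comm 1 j, Nat.choose_succ_self_right]
  rw [← hhead, ← one_div]
  exact (hasSum_nat_add_iff' 2).2 hfull

lemma one_add_tail_div_eq {𝕜 : Type*} [Field 𝕜] [CharZero 𝕜] (j : ℕ) {x : 𝕜} (hx : x ≠ 1) :
    1 + (((1 - x) ^ (j + 1))⁻¹ - (1 + (j + 1) * x)) / (j + 2) =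
      (1 - x) * (1 - 1 / ((j : 𝕜) + 2) + 1 / ((j : 𝕜) + 2) * ((1 - x) ^ (j + 2))⁻¹) := by
  have h1x : 1 - x ≠ 0 := sub_ne_zero.2 hx.symm
  have hj2 : (j : 𝕜) + 2 ≠ 0 := by exact_mod_cast (j + 1).succ_ne_zero
  rw [pow_succ (1 - x) (j + 1)]
  field_simp
  ring

/-- For `k ≥ 2` and a prime `p`, the local Euler factor of `g_k`:
`1 + ∑_{m ≥ 2} g_k(p^m)/p^m = (1-1/p)·(1 - 1/k + (1/k)(1-1/p)^{-k})`,
the series converging absolutely. -/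
theorem stmt_5 (k : ℕ) (hk : 2 ≤ k) (p : ℕ) (hp : p.Prime) :
    Summable (fun m : ℕ => |gk k (p ^ (m + 2)) / (p : ℝ) ^ (m + 2)|) ∧
    1 + ∑' m : ℕ, gk k (p ^ (m + 2)) / (p : ℝ) ^ (m + 2) =
      (1 - 1 / (p : ℝ)) * (1 - 1 / k + (1 / k : ℝ) * ((1 - 1 / (p : ℝ)) ^ k)⁻¹) := by
  obtain ⟨j, rfl⟩ : ∃ j, k = j + 2 := ⟨k - 2, by omega⟩
  have hp1 : (1 : ℝ) < p := by exact_mod_cast hp.one_lt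
  have hx0 : (0 : ℝ) ≤ 1 / p := by positivity
  have hx1 : 1 / (p : ℝ) < 1 := (div_lt_one (by linarith)).2 hp1
  have hterm (m : ℕ) : gk (j + 2) (p ^ (m + 2)) / (p : ℝ) ^ (m + 2) =
      ((m + 2 + j).choose j : ℝ) * (1 / p) ^ (m + 2) / (j + 2) := by
    rw [gk_prime_pow j hp (by omega), one_div_pow]
    ring
  have hsum := ((hasSum_choose_mul_geometric_tail j
    (by rwa [Real.norm_of_nonneg hx0])).div_const ((j : ℝ) + 2)).congr_fun hterm
  refine ⟨?_, ?_⟩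
  · refine hsum.summable.congr fun m => (abs_of_nonneg ?_).symm
    rw [hterm]
    positivity
  · rw [hsum.tsum_eq, one_add_tail_div_eq j hx1.ne]
    push_cast
    ring
end

section
/- Let k ≥ 2 be a fixed integer and q ≥ 1 an integer. There is a constant C depending only on k such that for all x ≥ 2, ∑_{n ≤ x, (n,q)=1} |g_k(n)| ≤ C·x^{1/2}·(log x)^{k-2}. -/
open Finset ArithmeticFunction Filter Asymptotics

/-!
Since `|g_k| ≤ s₂ · D_{k-1}`, the coprimality condition can be dropped. Write a 2-full `n` as
`s² w`, where `s` is the product of the primes dividing `n` exactly twice and `w` is cube-full.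
At such a prime `d_{k-1}(p²) / (k-1) = k/2 ≤ k-1 = d_{k-1}(p)`, so
`D_{k-1}(n) ≤ d_{k-1}(s) d_{k-1}(w)`, and the divisor bound gives `d_{k-1}(w) ≪ w^{1/8}`.
Every cube-full `w` is `a³b⁴c⁵`, and summing `d_{k-1}(s)` over `s ≤ √(x/w)` costs
`√(x/w) (1 + log x)^{k-2}`; the remaining sum `∑ w^{1/8 - 1/2} ≤ ∑_{a,b,c} (abc)^{-9/8}` converges.
-/

theorem piltz_apply_one (j : ℕ) : piltz j 1 = 1 := isMultiplicative_zeta.pow.map_one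

theorem piltz_zero_of_ne_one {n : ℕ} (hn : n ≠ 1) : piltz 0 n = 0 := by
  simp [piltz, one_apply_ne hn]

theorem piltz_one_of_ne_zero {n : ℕ} (hn : n ≠ 0) : piltz 1 n = 1 := by
  simp [piltz, hn]

theorem piltz_succ_prime_pow (j e : ℕ) {p : ℕ} (hp : p.Prime) :
    piltz (j + 1) (p ^ e) = ∑ i ∈ range (e + 1), piltz j (p ^ i) := by
  rw [piltz, pow_succ, mul_zeta_apply, Nat.sum_divisors_prime_pow hp]
  rfl

theorem piltz_prime (j : ℕ) {p : ℕ} (hp : p.Prime) : piltz j p = j := by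
  induction j with
  | zero => exact piltz_zero_of_ne_one hp.ne_one
  | succ j ih =>
    simpa [sum_range_succ, piltz_apply_one, ih, add_comm] using piltz_succ_prime_pow j 1 hp

theorem two_mul_piltz_prime_sq (j : ℕ) {p : ℕ} (hp : p.Prime) :
    2 * piltz j (p ^ 2) = j * (j + 1) := by
  induction j with
  | zero => simp [piltz_zero_of_ne_one (Nat.one_lt_pow two_ne_zero hp.one_lt).ne']
  | succ j ih =>
    rw [piltz_succ_prime_pow j 2 hp]
    simp only [sum_range_succ, range_one, sum_singleton, pow_zero, pow_one, piltz_prime j hp,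
      piltz_apply_one]
    linear_combination ih

theorem piltz_prime_pow_le (j e : ℕ) {p : ℕ} (hp : p.Prime) :
    piltz (j + 1) (p ^ e) ≤ (e + 1) ^ j := by
  induction j generalizing e with
  | zero => simp [piltz_one_of_ne_zero (pow_ne_zero e hp.ne_zero)]
  | succ j ih =>
    rw [piltz_succ_prime_pow _ e hp, pow_succ']
    calc ∑ i ∈ range (e + 1), piltz (j + 1) (p ^ i) ≤ ∑ _i ∈ range (e + 1), (e + 1) ^ j :=
          sum_le_sum fun i hi => (ih i).trans (Nat.pow_le_pow_left (by simpa using hi) j)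
      _ = (e + 1) * (e + 1) ^ j := by simp

theorem Real.log_natCast_le_log {m : ℕ} {y : ℝ} (hmy : (m : ℝ) ≤ y) (hy : 0 ≤ Real.log y) :
    Real.log m ≤ Real.log y := by
  rcases m.eq_zero_or_pos with rfl | hm
  · simpa using hy
  · exact Real.log_le_log (by positivity) hmy

theorem sum_Icc_piltz_succ (j N : ℕ) :
    ∑ n ∈ Icc 1 N, piltz (j + 1) n = ∑ n ∈ Icc 1 N, ∑ m ∈ Icc 1 (N / n), piltz j m := by
  have h := sum_Ioc_mul_eq_sum_sum zeta (zeta ^ j : ArithmeticFunction ℕ) N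
  rw [← pow_succ'] at h
  simp only [← Icc_add_one_left_eq_Ioc, zero_add] at h
  exact h.trans (sum_congr rfl fun n hn => by simp [piltz, show n ≠ 0 by grind])

theorem sum_Icc_piltz_le (j N : ℕ) :
    ∑ n ∈ Icc 1 N, (piltz (j + 1) n : ℝ) ≤ N * (1 + Real.log N) ^ j := by
  induction j generalizing N with
  | zero =>
    rw [sum_congr rfl fun n hn => by rw [piltz_one_of_ne_zero (by grind)]]
    simp
  | succ j ih =>
    have hharmonic : ∑ n ∈ Icc 1 N, (n : ℝ)⁻¹ ≤ 1 + Real.log N := by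
      simpa [harmonic_eq_sum_Icc] using harmonic_le_one_add_log N
    calc ∑ n ∈ Icc 1 N, (piltz (j + 2) n : ℝ)
        = ∑ n ∈ Icc 1 N, ∑ m ∈ Icc 1 (N / n), (piltz (j + 1) m : ℝ) := by
          exact_mod_cast sum_Icc_piltz_succ (j + 1) N
      _ ≤ ∑ n ∈ Icc 1 N, (N / n : ℝ) * (1 + Real.log N) ^ j := by
          gcongr with n hn
          refine (ih _).trans ?_
          have hlog := Real.log_natCast_le_log (Nat.cast_le.2 (Nat.div_le_self N n))
            (Real.log_natCast_nonneg N)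
          have hlog0 := Real.log_natCast_nonneg (N / n)
          exact mul_le_mul Nat.cast_div_le (by gcongr) (by positivity) (by positivity)
      _ = N * (1 + Real.log N) ^ j * ∑ n ∈ Icc 1 N, (n : ℝ)⁻¹ := by
          rw [mul_sum]; exact sum_congr rfl fun n _ => by ring
      _ ≤ N * (1 + Real.log N) ^ (j + 1) := by
          rw [pow_succ, ← mul_assoc]
          gcongr

theorem exists_add_one_pow_le_mul_pow (j : ℕ) {r : ℝ} (hr : 1 < r) :
    ∃ B : ℝ, 1 ≤ B ∧ ∀ e : ℕ, ((e : ℝ) + 1) ^ j ≤ B * r ^ e := by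
  have hlim : Tendsto (fun e : ℕ => ((e : ℝ) + 1) ^ j / r ^ e) atTop (nhds 0) := by
    have h := ((tendsto_pow_const_div_const_pow_of_one_lt j hr).comp
      (tendsto_add_atTop_nat 1)).const_mul r
    rw [mul_zero] at h
    refine h.congr fun e => ?_
    simp only [Function.comp_apply, Nat.cast_add, Nat.cast_one, pow_succ]
    field_simp
  obtain ⟨B, hB⟩ := hlim.bddAbove_range
  have hbound : ∀ e : ℕ, ((e : ℝ) + 1) ^ j / r ^ e ≤ B := fun e => hB ⟨e, rfl⟩
  refine ⟨B, by simpa using hbound 0, fun e => ?_⟩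
  have := hbound e
  rwa [div_le_iff₀ (by positivity)] at this

theorem exists_add_one_pow_le_mul_prime_pow_rpow (j : ℕ) {ε : ℝ} (hε : 0 < ε) :
    ∃ (B : ℝ) (P : ℕ), 1 ≤ B ∧ ∀ p e : ℕ, p.Prime →
      ((e : ℝ) + 1) ^ j ≤ (if p < P then B else 1) * ((p : ℝ) ^ e) ^ ε := by
  obtain ⟨B, hB1, hB⟩ := exists_add_one_pow_le_mul_pow j (Real.one_lt_rpow one_lt_two hε)
  refine ⟨B, ⌈(2 : ℝ) ^ (j / ε)⌉₊, hB1, fun p e hp => ?_⟩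
  have hp2 : (2 : ℝ) ≤ p := by exact_mod_cast hp.two_le
  rw [← Real.rpow_pow_comm (Nat.cast_nonneg p)]
  split_ifs with hP
  · calc ((e : ℝ) + 1) ^ j ≤ B * ((2 : ℝ) ^ ε) ^ e := hB e
      _ ≤ B * ((p : ℝ) ^ ε) ^ e := by gcongr
  · have h2j : (2 : ℝ) ^ j ≤ (p : ℝ) ^ ε := by
      calc (2 : ℝ) ^ j = ((2 : ℝ) ^ (j / ε)) ^ ε := by
            rw [← Real.rpow_mul (by norm_num), div_mul_cancel₀ _ hε.ne', Real.rpow_natCast]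
        _ ≤ (p : ℝ) ^ ε := by
            gcongr
            exact (Nat.le_ceil _).trans (by exact_mod_cast not_lt.1 hP)
    calc ((e : ℝ) + 1) ^ j ≤ ((2 : ℝ) ^ e) ^ j := by
          gcongr
          exact_mod_cast Nat.lt_two_pow_self
      _ = ((2 : ℝ) ^ j) ^ e := by rw [← pow_mul, ← pow_mul, mul_comm]
      _ ≤ 1 * ((p : ℝ) ^ ε) ^ e := by rw [one_mul]; gcongr

theorem piltz_eq_prod_primeFactors (j : ℕ) {n : ℕ} (hn : n ≠ 0) :
    piltz j n = ∏ p ∈ n.primeFactors, piltz j (p ^ n.factorization p) :=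
  isMultiplicative_zeta.pow.multiplicative_factorization _ hn

theorem exists_piltz_le_rpow (j : ℕ) {ε : ℝ} (hε : 0 < ε) :
    ∃ C : ℝ, 0 < C ∧ ∀ n : ℕ, n ≠ 0 → (piltz (j + 1) n : ℝ) ≤ C * (n : ℝ) ^ ε := by
  obtain ⟨B, P, hB1, hB⟩ := exists_add_one_pow_le_mul_prime_pow_rpow j hε
  refine ⟨B ^ P, by positivity, fun n hn => ?_⟩
  have hprime : ∀ p ∈ n.primeFactors, p.Prime := fun p hp => Nat.prime_of_mem_primeFactors hp
  have hweights : ∏ p ∈ n.primeFactors, (if p < P then B else 1) ≤ B ^ P := by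
    rw [prod_ite, prod_const, prod_const_one, mul_one]
    refine pow_le_pow_right₀ hB1 ((card_le_card fun p hp => ?_).trans (card_range P).le)
    simpa using (mem_filter.1 hp).2
  calc (piltz (j + 1) n : ℝ)
        = ∏ p ∈ n.primeFactors, (piltz (j + 1) (p ^ n.factorization p) : ℝ) := by
        rw [piltz_eq_prod_primeFactors _ hn, Nat.cast_prod]
    _ ≤ ∏ p ∈ n.primeFactors, ((if p < P then B else 1) * ((p : ℝ) ^ n.factorization p) ^ ε) := by
        refine prod_le_prod (fun _ _ => by positivity) fun p hp => ?_
        have h := piltz_prime_pow_le j (n.factorization p) (hprime p hp)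
        exact le_trans (by exact_mod_cast h) (hB p _ (hprime p hp))
    _ = (∏ p ∈ n.primeFactors, (if p < P then B else 1)) * (n : ℝ) ^ ε := by
        rw [prod_mul_distrib, Real.finsetProd_rpow _ _ (fun _ _ => by positivity)]
        congr
        exact_mod_cast (Nat.prod_primeFactors_pow_factorization hn).symm
    _ ≤ B ^ P * (n : ℝ) ^ ε := mul_le_mul_of_nonneg_right hweights (by positivity)

theorem piltz_prime_sq_div_le (j : ℕ) {p : ℕ} (hp : p.Prime) :
    (piltz (j + 1) (p ^ 2) : ℝ) / (j + 1 : ℕ) ≤ piltz (j + 1) p := by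
  have hsq : (2 : ℝ) * piltz (j + 1) (p ^ 2) = (j + 1) * (j + 2) := by
    exact_mod_cast two_mul_piltz_prime_sq (j + 1) hp
  rw [div_le_iff₀ (by positivity), piltz_prime _ hp]
  push_cast
  nlinarith

def CubeFull (n : ℕ) : Prop := ∀ p ∈ n.primeFactors, p ^ 3 ∣ n

theorem primeFactors_prod_pow {t : Finset ℕ} {e : ℕ → ℕ} (ht : ∀ p ∈ t, p.Prime)
    (he : ∀ p ∈ t, e p ≠ 0) : (∏ p ∈ t, p ^ e p).primeFactors = t := by
  induction t using Finset.induction_on with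
  | empty => simp
  | insert p t hpt ih =>
    have hp := ht p (mem_insert_self p t)
    rw [prod_insert hpt, Nat.primeFactors_mul (pow_ne_zero _ hp.ne_zero)
      (prod_ne_zero_iff.2 fun q hq => pow_ne_zero _ (ht q (mem_insert_of_mem hq)).ne_zero),
      Nat.primeFactors_prime_pow (he p (mem_insert_self p t)) hp,
      ih (fun q hq => ht q (mem_insert_of_mem hq)) (fun q hq => he q (mem_insert_of_mem hq))]
    rfl

theorem piltz_prod_prime_pow (j : ℕ) {t : Finset ℕ} (ht : ∀ p ∈ t, p.Prime) (e : ℕ → ℕ) :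
    piltz j (∏ p ∈ t, p ^ e p) = ∏ p ∈ t, piltz j (p ^ e p) :=
  isMultiplicative_zeta.pow.map_prod _ t fun p hp q hq hpq =>
    Nat.Coprime.pow _ _ ((Nat.coprime_primes (ht p hp) (ht q hq)).2 hpq)

theorem Dk_prod_prime_pow (j : ℕ) {t : Finset ℕ} {e : ℕ → ℕ} (ht : ∀ p ∈ t, p.Prime)
    (he : ∀ p ∈ t, e p ≠ 0) :
    Dk j (∏ p ∈ t, p ^ e p) = ∏ p ∈ t, (piltz j (p ^ e p) : ℝ) / j := by
  rw [Dk, primeFactors_prod_pow ht he, piltz_prod_prime_pow j ht, Nat.cast_prod, prod_div_distrib,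
    prod_const]

theorem TwoFull.exists_sq_mul_cubeFull (j : ℕ) {n : ℕ} (hn : n ≠ 0) (h : TwoFull n) :
    ∃ s w : ℕ, s ^ 2 * w = n ∧ CubeFull w ∧
      Dk (j + 1) n ≤ piltz (j + 1) s * piltz (j + 1) w := by
  set E := n.factorization
  have hprime : ∀ p ∈ n.primeFactors, p.Prime := fun p hp => Nat.prime_of_mem_primeFactors hp
  have hE2 : ∀ p ∈ n.primeFactors, 2 ≤ E p := fun p hp =>
    ((hprime p hp).pow_dvd_iff_le_factorization hn).1 (h p hp)
  set S := n.primeFactors.filter (E · = 2)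
  set W := n.primeFactors.filter (E · ≠ 2)
  have hE0 : ∀ p ∈ n.primeFactors, E p ≠ 0 := fun p hp => by have := hE2 p hp; omega
  have hSprime : ∀ p ∈ S, p.Prime := fun p hp => hprime p (mem_filter.1 hp).1
  have hWprime : ∀ p ∈ W, p.Prime := fun p hp => hprime p (mem_filter.1 hp).1
  have hW3 : ∀ p ∈ W, 3 ≤ E p := fun p hp => by
    have := hE2 p (mem_filter.1 hp).1
    have := (mem_filter.1 hp).2
    omega
  have hW0 : ∀ p ∈ W, E p ≠ 0 := fun p hp => hE0 p (mem_filter.1 hp).1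
  have hn_eq : n = (∏ p ∈ S, p) ^ 2 * ∏ p ∈ W, p ^ E p := by
    rw [← prod_pow, prod_congr rfl fun p hp => by rw [← (mem_filter.1 hp).2]]
    conv_lhs => rw [Nat.prod_primeFactors_pow_factorization hn]
    exact (prod_filter_mul_prod_filter_not _ _ _).symm
  refine ⟨∏ p ∈ S, p, ∏ p ∈ W, p ^ E p, hn_eq.symm, fun p hp => ?_, ?_⟩
  · rw [primeFactors_prod_pow hWprime hW0] at hp
    exact (pow_dvd_pow p (hW3 p hp)).trans (dvd_prod_of_mem _ hp)
  calc Dk (j + 1) n = ∏ p ∈ n.primeFactors, (piltz (j + 1) (p ^ E p) : ℝ) / (j + 1 : ℕ) := by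
        conv_lhs => rw [Nat.prod_primeFactors_pow_factorization hn]
        exact Dk_prod_prime_pow _ hprime hE0
    _ = (∏ p ∈ S, (piltz (j + 1) (p ^ E p) : ℝ) / (j + 1 : ℕ)) *
          ∏ p ∈ W, (piltz (j + 1) (p ^ E p) : ℝ) / (j + 1 : ℕ) :=
        (prod_filter_mul_prod_filter_not _ _ _).symm
    _ ≤ (∏ p ∈ S, (piltz (j + 1) p : ℝ)) * ∏ p ∈ W, (piltz (j + 1) (p ^ E p) : ℝ) := by
        gcongr with p hp p hp
        · rw [(mem_filter.1 hp).2]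
          exact piltz_prime_sq_div_le j (hSprime p hp)
        · exact div_le_self (by positivity) (by simp)
    _ = piltz (j + 1) (∏ p ∈ S, p) * piltz (j + 1) (∏ p ∈ W, p ^ E p) := by
        have hs : piltz (j + 1) (∏ p ∈ S, p) = ∏ p ∈ S, piltz (j + 1) p :=
          isMultiplicative_zeta.pow.map_prod_of_prime S hSprime
        rw [hs, piltz_prod_prime_pow _ hWprime]
        push_cast
        rfl

theorem CubeFull.exists_eq_pow_mul {w : ℕ} (hw : w ≠ 0) (h : CubeFull w) :
    ∃ a b c : ℕ, a ^ 3 * b ^ 4 * c ^ 5 = w := by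
  have hE3 : ∀ p ∈ w.primeFactors, 3 ≤ w.factorization p := fun p hp =>
    ((Nat.prime_of_mem_primeFactors hp).pow_dvd_iff_le_factorization hw).1 (h p hp)
  let β : ℕ → ℕ := fun e => if e % 3 = 1 then 1 else 0
  let γ : ℕ → ℕ := fun e => if e % 3 = 2 then 1 else 0
  let α : ℕ → ℕ := fun e => (e - 4 * β e - 5 * γ e) / 3
  refine ⟨∏ p ∈ w.primeFactors, p ^ α (w.factorization p),
    ∏ p ∈ w.primeFactors, p ^ β (w.factorization p),
    ∏ p ∈ w.primeFactors, p ^ γ (w.factorization p), ?_⟩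
  simp only [← prod_pow, ← prod_mul_distrib, ← pow_mul, ← pow_add]
  conv_rhs => rw [Nat.prod_primeFactors_pow_factorization hw]
  refine prod_congr rfl fun p hp => congrArg (p ^ ·) ?_
  have := hE3 p hp
  simp only [α, β, γ]
  split_ifs <;> omega

theorem Finset.sum_le_sum_of_forall_exists_lift {ι κ : Type*} {s : Finset ι} {t : Finset κ}
    {f : ι → ℝ} {g : κ → ℝ} (π : κ → ι) (hg : ∀ y ∈ t, 0 ≤ g y)
    (h : ∀ x ∈ s, ∃ y ∈ t, π y = x ∧ f x ≤ g y) : ∑ x ∈ s, f x ≤ ∑ y ∈ t, g y := by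
  classical
  have hfiber : ∀ x, ∀ y ∈ t.filter (π · = x), 0 ≤ g y := fun _ y hy => hg y (mem_filter.1 hy).1
  calc ∑ x ∈ s, f x ≤ ∑ x ∈ s, ∑ y ∈ t with π y = x, g y := sum_le_sum fun x hx => by
        obtain ⟨y, hy, rfl, hle⟩ := h x hx
        exact hle.trans <| single_le_sum (hfiber _) (mem_filter.2 ⟨hy, rfl⟩)
    _ ≤ ∑ y ∈ t, g y :=
        sum_fiberwise_le_sum_of_sum_fiber_nonneg fun x _ => sum_nonneg (hfiber x)

theorem sum_Icc_sqrt_div_piltz_le (j F N : ℕ) {x : ℝ} (hx : 1 ≤ x) (hN : (N : ℝ) ≤ x) :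
    ∑ s ∈ Icc 1 (Nat.sqrt (N / F)), (piltz (j + 1) s : ℝ) ≤ √(x / F) * (1 + Real.log x) ^ j := by
  set M := Nat.sqrt (N / F)
  have hMx : (M : ℝ) ≤ x :=
    le_trans (by exact_mod_cast (Nat.sqrt_le_self _).trans (Nat.div_le_self N F)) hN
  have hlogM := Real.log_natCast_le_log hMx (Real.log_nonneg hx)
  refine (sum_Icc_piltz_le j M).trans (mul_le_mul ?_ ?_ (by positivity) (Real.sqrt_nonneg _))
  · calc (M : ℝ) ≤ √((N / F : ℕ) : ℝ) := Real.nat_sqrt_le_real_sqrt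
      _ ≤ √(x / F) := Real.sqrt_le_sqrt (Nat.cast_div_le.trans (by gcongr))
  · have := Real.log_natCast_nonneg M
    gcongr

theorem rpow_mul_sqrt_div_le {F G : ℝ} (x : ℝ) (hG : 0 < G) (hGF : G ≤ F) :
    F ^ (1 / 8 : ℝ) * √(x / F) ≤ √x * G ^ (-(3 / 8) : ℝ) := by
  have hF : 0 < F := hG.trans_le hGF
  calc F ^ (1 / 8 : ℝ) * √(x / F) = √x * F ^ (-(3 / 8) : ℝ) := by
        rw [Real.sqrt_div' _ hF.le, Real.sqrt_eq_rpow F, mul_div_left_comm, ← Real.rpow_sub hF]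
        norm_num
    _ ≤ √x * G ^ (-(3 / 8) : ℝ) :=
        mul_le_mul_of_nonneg_left (Real.rpow_le_rpow_of_nonpos hG hGF (by norm_num))
          (Real.sqrt_nonneg x)

def cubeFullMk (u : ℕ × ℕ × ℕ) : ℕ := u.1 ^ 3 * u.2.1 ^ 4 * u.2.2 ^ 5

theorem sum_Dk_twoFull_le_sum_cube (j N : ℕ) {K : ℝ} (hK : 0 ≤ K)
    (hdiv : ∀ n : ℕ, n ≠ 0 → (piltz (j + 1) n : ℝ) ≤ K * (n : ℝ) ^ (1 / 8 : ℝ)) :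
    ∑ n ∈ (Icc 1 N).filter TwoFull, Dk (j + 1) n ≤
      ∑ u ∈ Icc 1 N ×ˢ Icc 1 N ×ˢ Icc 1 N, K * ((cubeFullMk u : ℝ) ^ (1 / 8 : ℝ) *
        ∑ s ∈ Icc 1 (Nat.sqrt (N / cubeFullMk u)), (piltz (j + 1) s : ℝ)) := by
  calc ∑ n ∈ (Icc 1 N).filter TwoFull, Dk (j + 1) n
      ≤ ∑ z ∈ (Icc 1 N ×ˢ Icc 1 N ×ˢ Icc 1 N).sigma fun u => Icc 1 (Nat.sqrt (N / cubeFullMk u)),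
          K * ((cubeFullMk z.1 : ℝ) ^ (1 / 8 : ℝ) * piltz (j + 1) z.2) := ?_
    _ = _ := by simp only [sum_sigma, mul_sum]
  refine sum_le_sum_of_forall_exists_lift (fun z => z.2 ^ 2 * cubeFullMk z.1)
    (fun z _ => by positivity) fun n hn => ?_
  obtain ⟨⟨hn1, hnN⟩, htf⟩ : (1 ≤ n ∧ n ≤ N) ∧ TwoFull n := by simpa using hn
  obtain ⟨s, w, hsw, hw, hD⟩ := htf.exists_sq_mul_cubeFull j (by omega)
  have hw0 : w ≠ 0 := by rintro rfl; omega
  obtain ⟨a, b, c, habc⟩ := hw.exists_eq_pow_mul hw0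
  have hFw : cubeFullMk (a, b, c) = w := habc
  have hwn : a ^ 3 * b ^ 4 * c ^ 5 ∣ n := habc ▸ hsw ▸ dvd_mul_left w _
  have hmem : ∀ m, m ∣ n → m ∈ Icc 1 N := fun m hm =>
    mem_Icc.2 ⟨Nat.pos_of_dvd_of_pos hm (by omega), (Nat.le_of_dvd (by omega) hm).trans hnN⟩
  refine ⟨⟨(a, b, c), s⟩, ?_, by rw [← hsw, ← hFw], ?_⟩
  · simp only [mem_sigma, mem_product]
    refine ⟨⟨hmem a ?_, hmem b ?_, hmem c ?_⟩, ?_⟩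
    · exact ((dvd_pow_self a three_ne_zero).mul_right _ |>.mul_right _).trans hwn
    · exact ((dvd_pow_self b four_ne_zero).mul_left _ |>.mul_right _).trans hwn
    · exact ((dvd_pow_self c (by norm_num)).mul_left _).trans hwn
    · rw [mem_Icc, Nat.le_sqrt', hFw, Nat.le_div_iff_mul_le (Nat.pos_of_ne_zero hw0)]
      exact ⟨Nat.pos_of_ne_zero (by rintro rfl; omega), hsw ▸ hnN⟩
  · calc Dk (j + 1) n ≤ piltz (j + 1) s * piltz (j + 1) w := hD
      _ ≤ piltz (j + 1) s * (K * (w : ℝ) ^ (1 / 8 : ℝ)) := by gcongr; exact hdiv w hw0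
      _ = _ := by rw [← hFw]; ring

theorem cubeFullMk_rpow_mul_sum_piltz_le (j N : ℕ) {x : ℝ} (hx : 1 ≤ x) (hN : (N : ℝ) ≤ x)
    {u : ℕ × ℕ × ℕ} (hu : 0 < u.1 ∧ 0 < u.2.1 ∧ 0 < u.2.2) :
    (cubeFullMk u : ℝ) ^ (1 / 8 : ℝ) *
        ∑ s ∈ Icc 1 (Nat.sqrt (N / cubeFullMk u)), (piltz (j + 1) s : ℝ) ≤
      √x * (1 + Real.log x) ^ j * ((u.1 : ℝ) ^ (-(9 / 8) : ℝ) *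
        ((u.2.1 : ℝ) ^ (-(9 / 8) : ℝ) * (u.2.2 : ℝ) ^ (-(9 / 8) : ℝ))) := by
  obtain ⟨ha, hb, hc⟩ := hu
  have hG : (0 : ℝ) < ((u.1 : ℝ) * u.2.1 * u.2.2) ^ 3 := by positivity
  have hGF : ((u.1 : ℝ) * u.2.1 * u.2.2) ^ 3 ≤ cubeFullMk u := by
    have hb1 : (1 : ℝ) ≤ u.2.1 := by exact_mod_cast hb
    have hc1 : (1 : ℝ) ≤ u.2.2 := by exact_mod_cast hc
    rw [cubeFullMk]
    push_cast
    rw [mul_pow, mul_pow]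
    gcongr <;> norm_num
  have hGpow : (((u.1 : ℝ) * u.2.1 * u.2.2) ^ 3) ^ (-(3 / 8) : ℝ) = (u.1 : ℝ) ^ (-(9 / 8) : ℝ) *
      ((u.2.1 : ℝ) ^ (-(9 / 8) : ℝ) * (u.2.2 : ℝ) ^ (-(9 / 8) : ℝ)) := by
    rw [← Real.rpow_natCast, ← Real.rpow_mul (by positivity),
      Real.mul_rpow (by positivity) (by positivity), Real.mul_rpow (by positivity) (by positivity)]
    norm_num
    ring
  have hL : 0 ≤ (1 + Real.log x) ^ j := pow_nonneg (by linarith [Real.log_nonneg hx]) j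
  calc (cubeFullMk u : ℝ) ^ (1 / 8 : ℝ) *
        ∑ s ∈ Icc 1 (Nat.sqrt (N / cubeFullMk u)), (piltz (j + 1) s : ℝ)
      ≤ (cubeFullMk u : ℝ) ^ (1 / 8 : ℝ) * (√(x / cubeFullMk u) * (1 + Real.log x) ^ j) := by
        gcongr
        exact sum_Icc_sqrt_div_piltz_le j _ N hx hN
    _ = ((cubeFullMk u : ℝ) ^ (1 / 8 : ℝ) * √(x / cubeFullMk u)) * (1 + Real.log x) ^ j := by ring
    _ ≤ √x * (((u.1 : ℝ) * u.2.1 * u.2.2) ^ 3) ^ (-(3 / 8) : ℝ) * (1 + Real.log x) ^ j :=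
        mul_le_mul_of_nonneg_right (rpow_mul_sqrt_div_le x hG hGF) hL
    _ = _ := by rw [hGpow]; ring

theorem exists_sum_Dk_twoFull_le (j : ℕ) : ∃ C : ℝ, 0 < C ∧ ∀ x : ℝ, 1 ≤ x →
    ∑ n ∈ (Icc 1 ⌊x⌋₊).filter TwoFull, Dk (j + 1) n ≤ C * √x * (1 + Real.log x) ^ j := by
  obtain ⟨K, hK, hdiv⟩ := exists_piltz_le_rpow j (ε := 1 / 8) (by norm_num)
  have hsumm : Summable fun m : ℕ => (m : ℝ) ^ (-(9 / 8) : ℝ) :=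
    Real.summable_nat_rpow.2 (by norm_num)
  set Z := ∑' m : ℕ, (m : ℝ) ^ (-(9 / 8) : ℝ)
  have hZ : 0 < Z := hsumm.tsum_pos (fun _ => by positivity) 1 (by norm_num)
  refine ⟨K * Z ^ 3, by positivity, fun x hx => ?_⟩
  set N := ⌊x⌋₊
  let φ : ℕ → ℝ := fun m => (m : ℝ) ^ (-(9 / 8) : ℝ)
  calc ∑ n ∈ (Icc 1 N).filter TwoFull, Dk (j + 1) n
      ≤ ∑ u ∈ Icc 1 N ×ˢ Icc 1 N ×ˢ Icc 1 N, K * ((cubeFullMk u : ℝ) ^ (1 / 8 : ℝ) *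
          ∑ s ∈ Icc 1 (Nat.sqrt (N / cubeFullMk u)), (piltz (j + 1) s : ℝ)) :=
        sum_Dk_twoFull_le_sum_cube j N hK.le hdiv
    _ ≤ ∑ u ∈ Icc 1 N ×ˢ Icc 1 N ×ˢ Icc 1 N,
          K * (√x * (1 + Real.log x) ^ j * (φ u.1 * (φ u.2.1 * φ u.2.2))) := by
        refine sum_le_sum fun u hu => mul_le_mul_of_nonneg_left ?_ hK.le
        simp only [mem_product, mem_Icc] at hu
        exact cubeFullMk_rpow_mul_sum_piltz_le j N hx (Nat.floor_le (by linarith))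
          ⟨by omega, by omega, by omega⟩
    _ = K * √x * (1 + Real.log x) ^ j * (∑ m ∈ Icc 1 N, φ m) ^ 3 := by
        simp only [sum_product, ← mul_sum, ← sum_mul]
        ring
    _ ≤ K * Z ^ 3 * √x * (1 + Real.log x) ^ j := by
        have := Real.log_nonneg hx
        rw [mul_right_comm _ ((1 + Real.log x) ^ j), mul_right_comm K]
        gcongr
        exact hsumm.sum_le_tsum _ fun _ _ => by positivity

theorem Dk_nonneg (j n : ℕ) : 0 ≤ Dk j n := by
  unfold Dk
  positivity

theorem s2_nonneg (n : ℕ) : 0 ≤ s2 n := by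
  unfold s2
  split_ifs <;> norm_num

theorem abs_gk_le (k n : ℕ) : |gk k n| ≤ s2 n * Dk (k - 1) n := by
  have hfactor : |((k : ℝ) - 1) / k| ≤ 1 := by
    rcases k.eq_zero_or_pos with rfl | hk
    · simp
    · have hk1 : (1 : ℝ) ≤ k := by exact_mod_cast hk
      rw [abs_of_nonneg (div_nonneg (by linarith) (by linarith)), div_le_one (by linarith)]
      linarith
  rw [gk, abs_mul, abs_mul, abs_of_nonneg (s2_nonneg n), abs_of_nonneg (Dk_nonneg _ _), mul_assoc]
  exact mul_le_of_le_one_left (mul_nonneg (s2_nonneg n) (Dk_nonneg _ _)) hfactor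

theorem sum_abs_gk_le (k : ℕ) (s : Finset ℕ) (P : ℕ → Prop) [DecidablePred P] :
    ∑ n ∈ s.filter P, |gk k n| ≤ ∑ n ∈ s.filter TwoFull, Dk (k - 1) n := by
  calc ∑ n ∈ s.filter P, |gk k n| ≤ ∑ n ∈ s.filter P, s2 n * Dk (k - 1) n :=
        sum_le_sum fun n _ => abs_gk_le k n
    _ ≤ ∑ n ∈ s, s2 n * Dk (k - 1) n :=
        sum_le_sum_of_subset_of_nonneg (filter_subset _ _) fun n _ _ =>
          mul_nonneg (s2_nonneg n) (Dk_nonneg _ _)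
    _ = ∑ n ∈ s.filter TwoFull, Dk (k - 1) n := by
        rw [sum_filter]
        simp [s2]

theorem one_add_log_le_three_mul_log {x : ℝ} (hx : 2 ≤ x) : 1 + Real.log x ≤ 3 * Real.log x := by
  have := Real.log_le_log two_pos hx
  linarith [Real.log_two_gt_d9]

/-- For `k ≥ 2` there is `C` depending only on `k` such that for every `q ≥ 1`
and all `x ≥ 2`, `∑_{n ≤ x, (n,q)=1} |g_k(n)| ≤ C·x^{1/2}·(log x)^{k-2}`. -/
theorem stmt_6 (k : ℕ) (hk : 2 ≤ k) :
    ∃ C : ℝ, 0 < C ∧ ∀ q : ℕ, 1 ≤ q → ∀ x : ℝ, 2 ≤ x →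
      ∑ n ∈ (Icc 1 ⌊x⌋₊).filter (fun n => n.gcd q = 1), |gk k n| ≤
        C * x ^ (1 / 2 : ℝ) * Real.log x ^ (k - 2) := by
  obtain ⟨i, rfl⟩ : ∃ i, k = i + 2 := ⟨k - 2, by omega⟩
  obtain ⟨C, hC, hsum⟩ := exists_sum_Dk_twoFull_le i
  refine ⟨C * 3 ^ i, by positivity, fun q _ x hx => ?_⟩
  calc ∑ n ∈ (Icc 1 ⌊x⌋₊).filter (fun n => n.gcd q = 1), |gk (i + 2) n|
      ≤ ∑ n ∈ (Icc 1 ⌊x⌋₊).filter TwoFull, Dk (i + 1) n := sum_abs_gk_le _ _ _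
    _ ≤ C * √x * (1 + Real.log x) ^ i := hsum x (by linarith)
    _ ≤ C * √x * (3 * Real.log x) ^ i := by
        have := Real.log_nonneg (show (1 : ℝ) ≤ x by linarith)
        gcongr
        exact one_add_log_le_three_mul_log hx
    _ = C * 3 ^ i * x ^ (1 / 2 : ℝ) * Real.log x ^ (i + 2 - 2) := by
        rw [Real.sqrt_eq_rpow, mul_pow, Nat.add_sub_cancel]
        ring
end
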